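/- With the notation of the previous statement, suppose additionally H_pp(t) ≥ m·I for some m > 0 and U(t) - S(t) ≥ 0 with smallest positive eigenvalue of U(t)-S(t) at least q₊(t) on the orthogonal complement of its kernel, and δq(t) ∉ ker(U(t)-S(t)). Then d/dt ( δqᵀ(U-S)δq ) ≥ m·q₊(t)·( δqᵀ(U-S)δq ), hence by Grönwall, δq(T)ᵀ(U-S)(T)δq(T) ≥ exp(∫₀ᵀ m·q₊(t)dt) · δq(0)ᵀ(U-S)(0)δq(0). -/

import Mathlib

open Matrix intervalIntegral

/-!
Subtracting the two Riccati equations, `P = U - S` satisfies `Ṗ + Bᵀ P + P B = P Hpp P` with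
`B = Hqp + Hpp U`, so along `δq' = B δq` the derivative of `δqᵀ P δq` is
`(P δq)ᵀ Hpp (P δq) ≥ m ‖P δq‖²`. Since `P ≥ 0` has no eigenvalue in `(0, q₊)`, the functional
calculus gives `P² ≥ q₊ P`, i.e. `‖P δq‖² ≥ q₊ δqᵀ P δq`. Grönwall's argument (monotonicity of
`exp (-∫ m q₊) · δqᵀ P δq`) then integrates the differential inequality.
-/

open scoped MatrixOrder in
lemma Matrix.PosSemidef.posSemidef_mul_self_sub_smul {ι : Type*} [Fintype ι] [DecidableEq ι]
    {A : Matrix ι ι ℝ} (hA : A.PosSemidef) {c : ℝ}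
    (hc : ∀ μ ∈ spectrum ℝ A, μ ≠ 0 → c ≤ μ) : (A * A - c • A).PosSemidef := by
  have hsa : IsSelfAdjoint A := hA.isHermitian
  have hcfc : A * A - c • A = cfc (fun x => x * x - c * x) A := by
    rw [cfc_sub .., cfc_mul .., cfc_const_mul .., cfc_id' ℝ A]
  rw [← nonneg_iff_posSemidef, hcfc]
  refine cfc_nonneg fun μ hμ => ?_
  have hμ0 : 0 ≤ μ := spectrum_nonneg_of_nonneg hA.nonneg hμ
  rcases eq_or_ne μ 0 with rfl | hne
  · simp
  · nlinarith [hc μ hμ hne]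

section QuadraticForm

variable {ι : Type*} [Fintype ι]

lemma Matrix.IsSymm.dotProduct_mulVec {R : Type*} [CommSemiring R] {A : Matrix ι ι R}
    (hA : A.IsSymm) (x y : ι → R) : x ⬝ᵥ A *ᵥ y = A *ᵥ x ⬝ᵥ y := by
  rw [Matrix.dotProduct_mulVec, ← mulVec_transpose, hA.eq]

lemma Matrix.PosSemidef.dotProduct_mulVec_le {A B : Matrix ι ι ℝ} (h : (A - B).PosSemidef)
    (x : ι → ℝ) : x ⬝ᵥ B *ᵥ x ≤ x ⬝ᵥ A *ᵥ x := by
  simpa [sub_mulVec] using h.dotProduct_mulVec_nonneg x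

lemma Matrix.IsSymm.mul_mul_dotProduct_mulVec_le [DecidableEq ι] {A H : Matrix ι ι ℝ} {m c : ℝ}
    (hA : A.IsSymm) (hm : 0 ≤ m) (hH : (H - m • (1 : Matrix ι ι ℝ)).PosSemidef)
    (hc : (A * A - c • A).PosSemidef) (x : ι → ℝ) :
    m * c * (x ⬝ᵥ A *ᵥ x) ≤ x ⬝ᵥ (A * H * A) *ᵥ x := by
  set w := A *ᵥ x
  have hAA : c * (x ⬝ᵥ A *ᵥ x) ≤ w ⬝ᵥ w := by
    simpa [smul_mulVec, ← mulVec_mulVec, hA.dotProduct_mulVec x] using hc.dotProduct_mulVec_le x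
  have hHw : m * (w ⬝ᵥ w) ≤ w ⬝ᵥ H *ᵥ w := by
    simpa [smul_mulVec] using hH.dotProduct_mulVec_le w
  calc m * c * (x ⬝ᵥ A *ᵥ x) ≤ m * (w ⬝ᵥ w) := by
        rw [mul_assoc]; exact mul_le_mul_of_nonneg_left hAA hm
    _ ≤ w ⬝ᵥ H *ᵥ w := hHw
    _ = x ⬝ᵥ (A * H * A) *ᵥ x := by
        rw [← mulVec_mulVec, ← mulVec_mulVec, hA.dotProduct_mulVec]

end QuadraticForm

lemma Matrix.riccati_sub_eq {R ι : Type*} [CommRing R] [Fintype ι]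
    {Hpp Hqp Hqq U U' S S' : Matrix ι ι R} (hHpp : Hpp.IsSymm) (hU : U.IsSymm)
    (hUric : U' + U * Hpp * U + U * Hqp + Hqpᵀ * U + Hqq = 0)
    (hSric : S' + S * Hpp * S + S * Hqp + Hqpᵀ * S + Hqq = 0) :
    (Hqp + Hpp * U)ᵀ * (U - S) + (U' - S') + (U - S) * (Hqp + Hpp * U)
      = (U - S) * Hpp * (U - S) := by
  have hU' : U' = -(U * Hpp * U + U * Hqp + Hqpᵀ * U + Hqq) := by
    rw [eq_neg_iff_add_eq_zero, ← hUric]; noncomm_ring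
  have hS' : S' = -(S * Hpp * S + S * Hqp + Hqpᵀ * S + Hqq) := by
    rw [eq_neg_iff_add_eq_zero, ← hSric]; noncomm_ring
  rw [hU', hS', transpose_add, transpose_mul, hHpp.eq, hU.eq]
  noncomm_ring

section Deriv

variable {ι : Type*} [Fintype ι] {t : ℝ}

theorem HasDerivAt.dotProduct {x y : ℝ → ι → ℝ} {x' y' : ι → ℝ} (hx : HasDerivAt x x' t)
    (hy : HasDerivAt y y' t) :
    HasDerivAt (fun s => x s ⬝ᵥ y s) (x' ⬝ᵥ y t + x t ⬝ᵥ y') t := by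
  have h : ∀ i ∈ Finset.univ,
      HasDerivAt (fun s => x s i * y s i) (x' i * y t i + x t i * y' i) t :=
    fun i _ => (hasDerivAt_pi.mp hx i).mul (hasDerivAt_pi.mp hy i)
  exact Finset.sum_add_distrib (f := fun i => x' i * y t i) ▸ HasDerivAt.fun_sum h

theorem HasDerivAt.mulVec {A : ℝ → Matrix ι ι ℝ} {A' : Matrix ι ι ℝ} {x : ℝ → ι → ℝ}
    {x' : ι → ℝ} (hA : ∀ i j, HasDerivAt (fun s => A s i j) (A' i j) t)
    (hx : HasDerivAt x x' t) :
    HasDerivAt (fun s => A s *ᵥ x s) (A' *ᵥ x t + A t *ᵥ x') t :=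
  hasDerivAt_pi.mpr fun i => (hasDerivAt_pi.mpr (hA i)).dotProduct hx

theorem HasDerivAt.dotProduct_mulVec_self {A : ℝ → Matrix ι ι ℝ} {A' B : Matrix ι ι ℝ}
    {x : ℝ → ι → ℝ} (hA : ∀ i j, HasDerivAt (fun s => A s i j) (A' i j) t)
    (hx : HasDerivAt x (B *ᵥ x t) t) :
    HasDerivAt (fun s => x s ⬝ᵥ A s *ᵥ x s) (x t ⬝ᵥ (Bᵀ * A t + A' + A t * B) *ᵥ x t) t := by
  convert hx.dotProduct (hx.mulVec hA) using 1
  rw [add_mulVec, add_mulVec, ← mulVec_mulVec, ← mulVec_mulVec, dotProduct_add, dotProduct_add,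
    dotProduct_add, Matrix.dotProduct_mulVec (x t) Bᵀ, vecMul_transpose, add_assoc]

end Deriv

theorem exp_integral_mul_le_of_hasDerivAt {f g g' : ℝ → ℝ} (hf : Continuous f)
    (hg : ∀ t, HasDerivAt g (g' t) t) (hle : ∀ t, f t * g t ≤ g' t) {a b : ℝ} (hab : a ≤ b) :
    Real.exp (∫ t in a..b, f t) * g a ≤ g b := by
  set F : ℝ → ℝ := fun u => ∫ t in a..u, f t
  have hF : ∀ u, HasDerivAt F (f u) u := fun u =>
    integral_hasDerivAt_right (hf.intervalIntegrable a u) (hf.stronglyMeasurableAtFilter _ _)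
      hf.continuousAt
  have hmono : Monotone fun u => Real.exp (-F u) * g u := by
    refine monotone_of_hasDerivAt_nonneg (fun u => ((hF u).neg.exp).mul (hg u)) fun u => ?_
    have := mul_nonneg (Real.exp_pos (-F u)).le (sub_nonneg.mpr (hle u))
    simp only [Pi.zero_apply, Pi.neg_apply]
    linarith
  have hab' := hmono hab
  simp only [F, integral_same, neg_zero, Real.exp_zero, one_mul] at hab'
  calc Real.exp (F b) * g a ≤ Real.exp (F b) * (Real.exp (-F b) * g b) :=
        mul_le_mul_of_nonneg_left hab' (Real.exp_pos _).le
    _ = g b := by rw [← mul_assoc, ← Real.exp_add, add_neg_cancel, Real.exp_zero, one_mul]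

theorem stmt11_general (n : ℕ) (Hpp Hqp Hpq Hqq U U' S S' : ℝ → Matrix (Fin n) (Fin n) ℝ)
    (δq : ℝ → (Fin n → ℝ)) (m : ℝ) (qp : ℝ → ℝ)
    (hHppsymm : ∀ t, (Hpp t).IsSymm)
    (hHpq : ∀ t, Hpq t = (Hqp t)ᵀ)
    (hUsymm : ∀ t, (U t).IsSymm)
    (hU' : ∀ t i j, HasDerivAt (fun s => U s i j) (U' t i j) t)
    (hS' : ∀ t i j, HasDerivAt (fun s => S s i j) (S' t i j) t)
    (hUric : ∀ t, U' t + U t * Hpp t * U t + U t * Hqp t + Hpq t * U t + Hqq t = 0)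
    (hSric : ∀ t, S' t + S t * Hpp t * S t + S t * Hqp t + Hpq t * S t + Hqq t = 0)
    (hδq : ∀ t, HasDerivAt δq (((Hqp t + Hpp t * U t).mulVec (δq t))) t)
    (hm : 0 < m)
    (hHppm : ∀ t, (Hpp t - m • (1 : Matrix (Fin n) (Fin n) ℝ)).PosSemidef)
    (hUS : ∀ t, (U t - S t).PosSemidef)
    (hqpcont : Continuous qp)
    (hqplow : ∀ t, ∀ lam ∈ spectrum ℝ (U t - S t), lam ≠ 0 → qp t ≤ lam) :
    (∀ t, m * qp t * (δq t ⬝ᵥ ((U t - S t).mulVec (δq t))) ≤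
        δq t ⬝ᵥ (((U t - S t) * Hpp t * (U t - S t)).mulVec (δq t))) ∧
      ∀ T, 0 ≤ T →
        Real.exp (∫ t in (0 : ℝ)..T, m * qp t) * (δq 0 ⬝ᵥ ((U 0 - S 0).mulVec (δq 0))) ≤
          δq T ⬝ᵥ ((U T - S T).mulVec (δq T)) := by
  have hbound : ∀ t, m * qp t * (δq t ⬝ᵥ (U t - S t) *ᵥ δq t) ≤
      δq t ⬝ᵥ ((U t - S t) * Hpp t * (U t - S t)) *ᵥ δq t := fun t =>
    (isHermitian_iff_isSymm.mp (hUS t).isHermitian).mul_mul_dotProduct_mulVec_le hm.le (hHppm t)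
      ((hUS t).posSemidef_mul_self_sub_smul (hqplow t)) (δq t)
  have hderiv : ∀ t, HasDerivAt (fun s => δq s ⬝ᵥ (U s - S s) *ᵥ δq s)
      (δq t ⬝ᵥ ((U t - S t) * Hpp t * (U t - S t)) *ᵥ δq t) t := fun t => by
    rw [← riccati_sub_eq (hHppsymm t) (hUsymm t) (hHpq t ▸ hUric t) (hHpq t ▸ hSric t)]
    exact HasDerivAt.dotProduct_mulVec_self (fun i j => (hU' t i j).sub (hS' t i j)) (hδq t)
  exact ⟨hbound, fun T hT =>
    exp_integral_mul_le_of_hasDerivAt (continuous_const.mul hqpcont) hderiv hbound hT⟩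

/-- In the setting of Statement 10, suppose moreover `Hpp(t) ≥ m·I` with `m > 0`,
`U(t) - S(t) ≥ 0` with all its positive eigenvalues at least `q₊(t)`, and
`δq(t) ∉ ker(U(t) - S(t))`. Then `d/dt (δqᵀ(U-S)δq) ≥ m·q₊(t)·(δqᵀ(U-S)δq)` and hence, by
Grönwall, `δq(T)ᵀ(U-S)(T)δq(T) ≥ exp(∫₀ᵀ m·q₊) · δq(0)ᵀ(U-S)(0)δq(0)`. -/
theorem stmt11 (n : ℕ) (Hpp Hqp Hpq Hqq U U' S S' : ℝ → Matrix (Fin n) (Fin n) ℝ)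
    (δq : ℝ → (Fin n → ℝ)) (m : ℝ) (qp : ℝ → ℝ)
    (hHppsymm : ∀ t, (Hpp t).IsSymm) (hHqqsymm : ∀ t, (Hqq t).IsSymm)
    (hHpq : ∀ t, Hpq t = (Hqp t)ᵀ)
    (hUsymm : ∀ t, (U t).IsSymm) (hSsymm : ∀ t, (S t).IsSymm)
    (hU' : ∀ t i j, HasDerivAt (fun s => U s i j) (U' t i j) t)
    (hS' : ∀ t i j, HasDerivAt (fun s => S s i j) (S' t i j) t)
    (hUric : ∀ t, U' t + U t * Hpp t * U t + U t * Hqp t + Hpq t * U t + Hqq t = 0)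
    (hSric : ∀ t, S' t + S t * Hpp t * S t + S t * Hqp t + Hpq t * S t + Hqq t = 0)
    (hδq : ∀ t, HasDerivAt δq (((Hqp t + Hpp t * U t).mulVec (δq t))) t)
    (hm : 0 < m)
    (hHppm : ∀ t, (Hpp t - m • (1 : Matrix (Fin n) (Fin n) ℝ)).PosSemidef)
    (hUS : ∀ t, (U t - S t).PosSemidef)
    (hqp : ∀ t, 0 < qp t) (hqpcont : Continuous qp)
    (hqplow : ∀ t, ∀ lam ∈ spectrum ℝ (U t - S t), lam ≠ 0 → qp t ≤ lam)
    (hker : ∀ t, (U t - S t).mulVec (δq t) ≠ 0) :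
    (∀ t, m * qp t * (δq t ⬝ᵥ ((U t - S t).mulVec (δq t))) ≤
        δq t ⬝ᵥ (((U t - S t) * Hpp t * (U t - S t)).mulVec (δq t))) ∧
      ∀ T, 0 ≤ T →
        Real.exp (∫ t in (0 : ℝ)..T, m * qp t) * (δq 0 ⬝ᵥ ((U 0 - S 0).mulVec (δq 0))) ≤
          δq T ⬝ᵥ ((U T - S T).mulVec (δq T)) :=
  stmt11_general n Hpp Hqp Hpq Hqq U U' S S' δq m qp hHppsymm hHpq hUsymm hU' hS' hUric hSric hδq hm
    hHppm hUS hqpcont hqplow
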